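/- arXiv:2205.08044 — 4 statements merged into one kernel-verified Lean document; each statement's English description precedes it below -/
import Mathlib

section
/- Let $(X, \mu)$ be a measure space, $\Psi : X \to [-\infty, -t_0]$ measurable for some $t_0 \in \mathbb{R}$, $h : X \to [0, +\infty]$ measurable, and $q > 1$, $C \ge 0$ constants. Suppose that for all $t \ge t_0$ one has $\int_{\{q\Psi < -qt\}} h \, d\mu \ge e^{-qt + qt_0} C$. Then $\int_X h \, e^{-\Psi} \, d\mu \ge \frac{q}{q-1} e^{t_0} C$. -/
/-!
With `ν = h · μ`, the layer cake formula and the substitution `s = eᵗ` give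
`∫ h e^{-Ψ} dμ = ∫_ℝ eᵗ ν{Ψ < -t} dt`, also when `Ψ = -∞` on a `ν`-non-null set (both sides
are then infinite). The tail `t ↦ ν{Ψ < -t}` is antitone, hence at least `C` for `t ≤ t₀`, and at
least `e^{-q(t - t₀)} C` for `t ≥ t₀` by hypothesis. Integrating these bounds against `eᵗ` gives
`e^{t₀} C + e^{t₀} C / (q - 1)`.
-/

open MeasureTheory Set
open scoped ENNReal

theorem lintegral_eq_lintegral_meas_ofReal_lt {α : Type*} [MeasurableSpace α] (μ : Measure α)
    {f : α → ℝ≥0∞} (hf : AEMeasurable f μ) :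
    ∫⁻ x, f x ∂μ = ∫⁻ s in Ioi (0 : ℝ), μ {x | ENNReal.ofReal s < f x} := by
  by_cases htop : μ {x | f x = ∞} = 0
  · have hfin : ∀ᵐ x ∂μ, f x ≠ ∞ := ae_iff.2 (by simpa using htop)
    calc ∫⁻ x, f x ∂μ = ∫⁻ x, ENNReal.ofReal (f x).toReal ∂μ :=
          lintegral_congr_ae (hfin.mono fun x hx => (ENNReal.ofReal_toReal hx).symm)
      _ = ∫⁻ s in Ioi (0 : ℝ), μ {x | s < (f x).toReal} :=
          lintegral_eq_lintegral_meas_lt μ (ae_of_all _ fun _ => ENNReal.toReal_nonneg)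
            hf.ennreal_toReal
      _ = ∫⁻ s in Ioi (0 : ℝ), μ {x | ENNReal.ofReal s < f x} :=
          setLIntegral_congr_fun measurableSet_Ioi fun s hs => measure_congr <|
            hfin.mono fun x hx => propext (ENNReal.ofReal_lt_iff_lt_toReal hs.le hx).symm
  · rw [lintegral_eq_top_of_measure_eq_top_ne_zero hf htop, eq_comm, eq_top_iff]
    calc ∞ = ∫⁻ _ in Ioi (0 : ℝ), μ {x | f x = ∞} := by
          rw [setLIntegral_const, Real.volume_Ioi, ENNReal.mul_top htop]
      _ ≤ ∫⁻ s in Ioi (0 : ℝ), μ {x | ENNReal.ofReal s < f x} :=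
          lintegral_mono fun s => measure_mono fun x (hx : f x = ∞) =>
            show ENNReal.ofReal s < f x from hx ▸ ENNReal.ofReal_lt_top

theorem lintegral_Ioi_zero_eq_lintegral_exp_mul (F : ℝ → ℝ≥0∞) :
    ∫⁻ s in Ioi (0 : ℝ), F s = ∫⁻ t, ENNReal.ofReal (Real.exp t) * F (Real.exp t) := by
  have := lintegral_image_eq_lintegral_abs_deriv_mul MeasurableSet.univ
    (fun t _ => (Real.hasDerivAt_exp t).hasDerivWithinAt) Real.exp_injective.injOn F
  simpa [Real.range_exp, abs_of_pos (Real.exp_pos _)] using this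

theorem lintegral_erealExp_eq_lintegral_exp_mul_meas_lt {α : Type*} [MeasurableSpace α]
    (μ : Measure α) {φ : α → EReal} (hφ : AEMeasurable φ μ) :
    ∫⁻ x, EReal.exp (φ x) ∂μ =
      ∫⁻ t : ℝ, ENNReal.ofReal (Real.exp t) * μ {x | (t : EReal) < φ x} := by
  rw [lintegral_eq_lintegral_meas_ofReal_lt μ (f := fun x => EReal.exp (φ x))
      (EReal.exp_monotone.measurable.comp_aemeasurable hφ),
    lintegral_Ioi_zero_eq_lintegral_exp_mul]
  simp_rw [← EReal.exp_coe, EReal.exp_lt_exp_iff]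

theorem lintegral_Iic_exp (c : ℝ) :
    ∫⁻ t in Iic c, ENNReal.ofReal (Real.exp t) = ENNReal.ofReal (Real.exp c) := by
  rw [← ofReal_integral_eq_lintegral_ofReal (integrableOn_exp_Iic c)
    (ae_of_all _ fun _ => (Real.exp_pos _).le), integral_exp_Iic]

theorem lintegral_Ioi_exp_mul {a : ℝ} (ha : a < 0) (c : ℝ) :
    ∫⁻ t in Ioi c, ENNReal.ofReal (Real.exp (a * t)) = ENNReal.ofReal (Real.exp (a * c) / -a) := by
  rw [← ofReal_integral_eq_lintegral_ofReal (integrableOn_exp_mul_Ioi ha c)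
    (ae_of_all _ fun _ => (Real.exp_pos _).le), integral_exp_mul_Ioi ha, neg_div, div_neg]

theorem ofReal_mul_le_lintegral_exp_mul_of_antitone {F : ℝ → ℝ≥0∞} (hF : Antitone F)
    {t₀ q : ℝ} (hq : 1 < q) {c : ℝ≥0∞}
    (hlow : ∀ t, t₀ ≤ t → ENNReal.ofReal (Real.exp (-q * t + q * t₀)) * c ≤ F t) :
    ENNReal.ofReal (q / (q - 1) * Real.exp t₀) * c ≤
      ∫⁻ t, ENNReal.ofReal (Real.exp t) * F t := by
  have hsplit : q / (q - 1) * Real.exp t₀ =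
      Real.exp t₀ + Real.exp (q * t₀) * (Real.exp ((1 - q) * t₀) / -(1 - q)) := by
    have hexp : Real.exp (q * t₀) * Real.exp ((1 - q) * t₀) = Real.exp t₀ := by
      rw [← Real.exp_add]; ring_nf
    have hq1 : q - 1 ≠ 0 := by linarith
    rw [mul_div_assoc', hexp, neg_sub]
    field_simp
    ring
  have hIic : ∀ t ∈ Iic t₀, ENNReal.ofReal (Real.exp t) * c ≤ ENNReal.ofReal (Real.exp t) * F t :=
    fun t ht => by gcongr; simpa using (hlow t₀ le_rfl).trans (hF ht)
  have hIoi : ∀ t ∈ Ioi t₀, ENNReal.ofReal (Real.exp (q * t₀)) *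
      ENNReal.ofReal (Real.exp ((1 - q) * t)) * c ≤ ENNReal.ofReal (Real.exp t) * F t := by
    intro t ht
    calc _ = ENNReal.ofReal (Real.exp t) * (ENNReal.ofReal (Real.exp (-q * t + q * t₀)) * c) := by
          rw [← mul_assoc]
          congr 1
          rw [← ENNReal.ofReal_mul (Real.exp_pos _).le,
            ← ENNReal.ofReal_mul (Real.exp_pos _).le, ← Real.exp_add, ← Real.exp_add]
          ring_nf
      _ ≤ _ := by gcongr; exact hlow t ht.le
  calc ENNReal.ofReal (q / (q - 1) * Real.exp t₀) * c
      = ENNReal.ofReal (Real.exp t₀) * c + ENNReal.ofReal (Real.exp (q * t₀)) *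
          ENNReal.ofReal (Real.exp ((1 - q) * t₀) / -(1 - q)) * c := by
        rw [hsplit, ENNReal.ofReal_add (Real.exp_pos _).le
          (mul_nonneg (Real.exp_pos _).le (div_nonneg (Real.exp_pos _).le (by linarith))),
          ENNReal.ofReal_mul (Real.exp_pos _).le, add_mul]
    _ = (∫⁻ t in Iic t₀, ENNReal.ofReal (Real.exp t) * c) + ∫⁻ t in Ioi t₀,
          ENNReal.ofReal (Real.exp (q * t₀)) * ENNReal.ofReal (Real.exp ((1 - q) * t)) * c := by
        rw [lintegral_mul_const _ (by fun_prop), lintegral_Iic_exp,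
          lintegral_mul_const _ (by fun_prop), lintegral_const_mul _ (by fun_prop),
          lintegral_Ioi_exp_mul (by linarith)]
    _ ≤ (∫⁻ t in Iic t₀, ENNReal.ofReal (Real.exp t) * F t) +
          ∫⁻ t in Ioi t₀, ENNReal.ofReal (Real.exp t) * F t :=
        add_le_add (setLIntegral_mono' measurableSet_Iic hIic)
          (setLIntegral_mono' measurableSet_Ioi hIoi)
    _ = ∫⁻ t, ENNReal.ofReal (Real.exp t) * F t := by
        rw [← compl_Iic, lintegral_add_compl _ measurableSet_Iic]

theorem EReal.coe_mul_lt_coe_neg_mul_iff {q : ℝ} (hq : 0 < q) (y : EReal) (t : ℝ) :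
    (q : EReal) * y < ((-(q * t) : ℝ) : EReal) ↔ (t : EReal) < -y := by
  induction y using EReal.rec with
  | bot =>
    simp only [EReal.coe_mul_bot_of_pos hq, EReal.neg_bot, EReal.coe_lt_top, iff_true]
    exact EReal.bot_lt_coe _
  | top => simp [EReal.coe_mul_top_of_pos hq]
  | coe y =>
    rw [← EReal.coe_neg, ← EReal.coe_mul]
    norm_cast
    constructor <;> intro <;> nlinarith

theorem lower_bound_exp_integral_general {X : Type*} [MeasurableSpace X] (μ : Measure X)
    (t₀ : ℝ) (Ψ : X → EReal) (hΨm : Measurable Ψ)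
    (h : X → ENNReal) (hh : Measurable h)
    (q C : ℝ) (hq : 1 < q)
    (hlow : ∀ t : ℝ, t₀ ≤ t →
      ENNReal.ofReal (Real.exp (-q * t + q * t₀) * C) ≤
        ∫⁻ x in {x : X | (q : EReal) * Ψ x < (↑(-(q * t)) : EReal)}, h x ∂μ) :
    ENNReal.ofReal (q / (q - 1) * Real.exp t₀ * C) ≤
      ∫⁻ x, h x * EReal.exp (-(Ψ x)) ∂μ := by
  set ν := μ.withDensity h
  have htail : Antitone fun t : ℝ => ν {x | (t : EReal) < -Ψ x} := fun s t hst =>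
    measure_mono fun x (hx : (t : EReal) < -Ψ x) => (EReal.coe_le_coe_iff.2 hst).trans_lt hx
  have hdensity : ∫⁻ x, EReal.exp (-(Ψ x)) ∂ν = ∫⁻ x, h x * EReal.exp (-(Ψ x)) ∂μ :=
    lintegral_withDensity_eq_lintegral_mul μ hh (EReal.exp_monotone.measurable.comp hΨm.neg)
  rw [← hdensity, lintegral_erealExp_eq_lintegral_exp_mul_meas_lt ν (φ := fun x => -Ψ x)
      hΨm.neg.aemeasurable,
    ENNReal.ofReal_mul (mul_nonneg (div_nonneg (by linarith) (by linarith)) (Real.exp_pos _).le)]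
  refine ofReal_mul_le_lintegral_exp_mul_of_antitone htail hq fun t ht => ?_
  rw [← ENNReal.ofReal_mul (Real.exp_pos _).le]
  calc _ ≤ ∫⁻ x in {x | (q : EReal) * Ψ x < ↑(-(q * t))}, h x ∂μ := hlow t ht
    _ = ∫⁻ x in {x | (t : EReal) < -Ψ x}, h x ∂μ := by
        simp_rw [EReal.coe_mul_lt_coe_neg_mul_iff (by linarith : 0 < q)]
    _ ≤ ν {x | (t : EReal) < -Ψ x} := withDensity_apply_le h _

/-- If `Ψ ≤ -t₀` and `∫_{{Ψ < -t}} h dμ ≥ e^{-qt + qt₀} C` for all `t ≥ t₀`, with `q > 1`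
and `C ≥ 0`, then `∫ h e^{-Ψ} dμ ≥ (q/(q-1)) e^{t₀} C`. -/
theorem lower_bound_exp_integral {X : Type*} [MeasurableSpace X] (μ : Measure X)
    (t₀ : ℝ) (Ψ : X → EReal) (hΨm : Measurable Ψ) (hΨ : ∀ x, Ψ x ≤ (↑(-t₀) : EReal))
    (h : X → ENNReal) (hh : Measurable h)
    (q C : ℝ) (hq : 1 < q) (hC : 0 ≤ C)
    (hlow : ∀ t : ℝ, t₀ ≤ t →
      ENNReal.ofReal (Real.exp (-q * t + q * t₀) * C) ≤
        ∫⁻ x in {x : X | (q : EReal) * Ψ x < (↑(-(q * t)) : EReal)}, h x ∂μ) :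
    ENNReal.ofReal (q / (q - 1) * Real.exp t₀ * C) ≤
      ∫⁻ x, h x * EReal.exp (-(Ψ x)) ∂μ :=
  lower_bound_exp_integral_general μ t₀ Ψ hΨm h hh q C hq hlow
end

section
/- Let $k$ be a positive integer and $M_0 = \{(z, w) \in \Delta \times \Delta^* : |z| < |w|^k\}$. For integers $j$ and $l$ with $j < 0$ or $jk + k + l < 0$, the integral $\int_{M_0} |z|^{2j} |w|^{2l} \, d\mu(z,w)$ is infinite. -/
open MeasureTheory Metric Set ENNReal

lemma measurable_zpow_real (n : ℤ) : Measurable fun x : ℝ => x ^ n := by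
  cases n with
  | ofNat m => simpa using measurable_id.pow_const (α := ℝ) m
  | negSucc m => simpa [zpow_negSucc] using (measurable_id.pow_const (α := ℝ) (m+1))


lemma volume_annulus (ρ : ℝ) (hρ : 0 < ρ) :
    volume (ball (0:ℂ) ρ \ closedBall 0 (ρ/2)) = ENNReal.ofReal (3/4 * ρ^2) * NNReal.pi := by
  rw [measure_diff (closedBall_subset_ball (by linarith))
      measurableSet_closedBall.nullMeasurableSet measure_closedBall_lt_top.ne,
    Complex.volume_ball, Complex.volume_closedBall,
    ← ENNReal.ofReal_pow hρ.le, ← ENNReal.ofReal_pow (by positivity),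
    ← ENNReal.sub_mul (fun _ _ => ENNReal.coe_ne_top),
    ← ENNReal.ofReal_sub _ (by positivity)]
  congr 2
  ring

lemma lintegral_inv_sq_top {r : ℝ} (hr : 0 < r) :
    ∫⁻ z in ball (0:ℂ) r, ENNReal.ofReal ((‖z‖ ^ 2)⁻¹) = ⊤ := by
  set ρ : ℕ → ℝ := fun i => r / 2 ^ i with hρdef
  have hρpos : ∀ i, 0 < ρ i := fun i => by positivity
  have hρle : ∀ i, ρ i ≤ r := fun i => by
    rw [hρdef]; exact div_le_self hr.le (one_le_pow₀ one_le_two)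
  have hρanti : ∀ i j : ℕ, i ≤ j → ρ j ≤ ρ i := fun i j hij => by
    apply div_le_div_of_nonneg_left hr.le (by positivity)
    exact pow_le_pow_right₀ one_le_two hij
  set A : ℕ → Set ℂ := fun i => ball (0:ℂ) (ρ i) \ closedBall 0 (ρ i / 2) with hAdef
  have hAmeas : ∀ i, MeasurableSet (A i) :=
    fun i => measurableSet_ball.diff measurableSet_closedBall
  have hAmem : ∀ i z, z ∈ A i ↔ ‖z‖ < ρ i ∧ ρ i / 2 < ‖z‖ := by
    intro i z
    simp [hAdef, mem_ball_zero_iff, mem_closedBall_zero_iff, not_le]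
  have hhalf : ∀ i, ρ i / 2 = ρ (i + 1) := fun i => by
    rw [hρdef]; simp [pow_succ]; ring
  have key : ∀ i j : ℕ, i < j → Disjoint (A i) (A j) := by
    intro i j h
    apply Set.disjoint_left.2
    intro z hzi hzj
    rw [hAmem] at hzi hzj
    have h1 : ρ j ≤ ρ (i + 1) := hρanti _ _ (by omega)
    rw [← hhalf] at h1
    linarith [hzi.2, hzj.1]
  have hdisj : Pairwise (Function.onFun Disjoint A) := by
    intro i j hij
    rcases hij.lt_or_gt with h | h
    · exact key i j h
    · exact (key j i h).symm
  have hsub : (⋃ i, A i) ⊆ ball (0:ℂ) r := by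
    intro z hz
    rcases mem_iUnion.1 hz with ⟨i, hi⟩
    exact ball_subset_ball (hρle i) hi.1
  have hterm : ∀ i, ENNReal.ofReal (3/4) * (NNReal.pi : ℝ≥0∞) ≤
      ∫⁻ z in A i, ENNReal.ofReal ((‖z‖ ^ 2)⁻¹) := by
    intro i
    have hvol : volume (A i) = ENNReal.ofReal (3/4 * ρ i ^ 2) * NNReal.pi :=
      volume_annulus _ (hρpos i)
    calc ENNReal.ofReal (3/4) * (NNReal.pi : ℝ≥0∞)
        = ENNReal.ofReal ((ρ i ^ 2)⁻¹) * volume (A i) := by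
          rw [hvol, ← mul_assoc, ← ENNReal.ofReal_mul (by positivity)]
          congr 2
          have := (hρpos i).ne'
          field_simp
      _ = ∫⁻ _ in A i, ENNReal.ofReal ((ρ i ^ 2)⁻¹) := (setLIntegral_const _ _).symm
      _ ≤ ∫⁻ z in A i, ENNReal.ofReal ((‖z‖ ^ 2)⁻¹) := by
          apply setLIntegral_mono
            ((((continuous_norm (E := ℂ)).measurable.pow_const 2).inv).ennreal_ofReal)
          intro z hz
          rw [hAmem] at hz
          apply ENNReal.ofReal_le_ofReal
          have habs : 0 < ‖z‖ := lt_trans (by positivity) hz.2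
          exact inv_anti₀ (pow_pos habs 2)
            (pow_le_pow_left₀ (norm_nonneg z) hz.1.le 2)
  have hpi : (NNReal.pi : ℝ≥0∞) ≠ 0 := by
    simp [NNReal.pi_ne_zero]
  refine top_le_iff.1 ?_
  calc (⊤ : ℝ≥0∞) = ∑' _ : ℕ, ENNReal.ofReal (3/4) * (NNReal.pi : ℝ≥0∞) :=
        (ENNReal.tsum_const_eq_top_of_ne_zero
          (mul_ne_zero (by simp [ENNReal.ofReal_eq_zero]) hpi)).symm
    _ ≤ ∑' i, ∫⁻ z in A i, ENNReal.ofReal ((‖z‖ ^ 2)⁻¹) :=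
        ENNReal.tsum_le_tsum hterm
    _ = ∫⁻ z in ⋃ i, A i, ENNReal.ofReal ((‖z‖ ^ 2)⁻¹) :=
        (lintegral_iUnion hAmeas hdisj _).symm
    _ ≤ _ := lintegral_mono_set hsub

/-- For `M₀ = {(z,w) ∈ Δ × Δ* : |z| < |w|^k}` and integers `j`, `l` with `j < 0` or
`jk + k + l < 0`, the integral `∫_{M₀} |z|^{2j} |w|^{2l} dμ` is infinite. -/
theorem monomial_integral_M0_infinite (k : ℕ) (hk : 0 < k) (j l : ℤ)
    (hjl : j < 0 ∨ j * k + k + l < 0) :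
    (∫⁻ p in {p : ℂ × ℂ | ‖p.1‖ < 1 ∧ ‖p.2‖ < 1 ∧ p.2 ≠ 0 ∧
        ‖p.1‖ < ‖p.2‖ ^ k},
      ENNReal.ofReal ((‖p.1‖ : ℝ) ^ (2 * j) *
        (‖p.2‖ : ℝ) ^ (2 * l))) = ⊤ := by
  set M : Set (ℂ × ℂ) := {p : ℂ × ℂ | ‖p.1‖ < 1 ∧ ‖p.2‖ < 1 ∧ p.2 ≠ 0 ∧
      ‖p.1‖ < ‖p.2‖ ^ k} with hMdef
  set f : ℂ × ℂ → ℝ≥0∞ := fun p => ENNReal.ofReal ((‖p.1‖ : ℝ) ^ (2 * j) *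
      (‖p.2‖ : ℝ) ^ (2 * l)) with hfdef
  rcases lt_or_ge j 0 with hj | hj
  · -- case j < 0
    set c : ℝ := min ((1/2:ℝ) ^ (2*l)) 1 with hcdef
    have hcpos : 0 < c := lt_min (zpow_pos (by norm_num) _) one_pos
    set S : Set (ℂ × ℂ) :=
      (ball (0:ℂ) ((1/2:ℝ)^k)) ×ˢ (ball (0:ℂ) 1 \ closedBall 0 ((1:ℝ)/2)) with hSdef
    have hSsub : S ⊆ M := by
      rintro ⟨z, w⟩ ⟨hz, hw⟩
      simp only [mem_ball_zero_iff] at hz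
      have hw1 : ‖w‖ < 1 := by
        have := hw.1; simpa [mem_ball_zero_iff] using this
      have hw2 : (1:ℝ)/2 < ‖w‖ := by
        have := hw.2
        simpa [mem_closedBall_zero_iff, not_le] using this
      have hwne : w ≠ 0 := by
        intro h; rw [h] at hw2; simp at hw2; linarith
      refine ⟨lt_of_lt_of_le hz (pow_le_one₀ (by norm_num) (by norm_num)), hw1, hwne, ?_⟩
      calc ‖z‖ < ((1:ℝ)/2)^k := hz
        _ ≤ ‖w‖ ^ k := pow_le_pow_left₀ (by norm_num) hw2.le k
    have hg : Measurable fun p : ℂ × ℂ => ENNReal.ofReal (c * (‖p.1‖ ^ 2)⁻¹) :=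
      (measurable_const.mul
        ((((continuous_norm (E := ℂ)).measurable.comp measurable_fst).pow_const 2).inv)).ennreal_ofReal
    have hfmeas : Measurable f := by
      apply Measurable.ennreal_ofReal
      exact ((measurable_zpow_real (2*j)).comp
          ((continuous_norm (E := ℂ)).measurable.comp measurable_fst)).mul
        ((measurable_zpow_real (2*l)).comp
          ((continuous_norm (E := ℂ)).measurable.comp measurable_snd))
    have hpt : ∀ p ∈ S, ENNReal.ofReal (c * (‖p.1‖ ^ 2)⁻¹) ≤ f p := by
      rintro ⟨z, w⟩ ⟨hz, hw⟩
      simp only [mem_ball_zero_iff] at hz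
      have hw1 : ‖w‖ < 1 := by
        have := hw.1; simpa [mem_ball_zero_iff] using this
      have hw2 : (1:ℝ)/2 < ‖w‖ := by
        have := hw.2
        simpa [mem_closedBall_zero_iff, not_le] using this
      by_cases hz0 : z = 0
      · simp [hfdef, hz0, zero_zpow _ (show 2*j ≠ 0 by omega)]
      have habs : 0 < ‖z‖ := norm_pos_iff.2 hz0
      have hz1 : ‖z‖ < 1 :=
        lt_of_lt_of_le hz (pow_le_one₀ (by norm_num) (by norm_num))
      have h1 : (‖z‖ ^ 2)⁻¹ ≤ ‖z‖ ^ (2*j) := by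
        have h := zpow_le_zpow_right_of_le_one₀ habs hz1.le (show 2*j ≤ -2 by omega)
        simpa [zpow_neg] using h
      have habsw : 0 < ‖w‖ := by linarith
      have h2 : c ≤ ‖w‖ ^ (2*l) := by
        rcases le_or_gt 0 l with hl | hl
        · refine le_trans (min_le_left _ _) ?_
          have he : (2*l) = ((2*l).toNat : ℤ) := (Int.toNat_of_nonneg (by omega)).symm
          rw [he, zpow_natCast, zpow_natCast]
          exact pow_le_pow_left₀ (by norm_num) hw2.le _
        · refine le_trans (min_le_right _ _) ?_
          have h := zpow_right_anti₀ habsw hw1.le (show 2*l ≤ 0 by omega)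
          simpa using h
      apply ENNReal.ofReal_le_ofReal
      calc c * (‖z‖ ^ 2)⁻¹
          ≤ ‖w‖ ^ (2*l) * ‖z‖ ^ (2*j) :=
            mul_le_mul h2 h1 (by positivity) (zpow_nonneg (norm_nonneg w) _)
        _ = ‖z‖ ^ (2*j) * ‖w‖ ^ (2*l) := mul_comm _ _
    have hprod : ∫⁻ p in S, ENNReal.ofReal (c * (‖p.1‖ ^ 2)⁻¹) = ⊤ := by
      rw [hSdef, MeasureTheory.Measure.volume_eq_prod, ← Measure.prod_restrict]
      rw [lintegral_congr (g := fun p : ℂ × ℂ =>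
        (fun z => ENNReal.ofReal (c * (‖z‖ ^ 2)⁻¹)) p.1 * (fun _ : ℂ => 1) p.2)
        (fun p => by simp)]
      rw [lintegral_prod_mul
        (show Measurable fun z : ℂ => ENNReal.ofReal (c * (‖z‖ ^ 2)⁻¹) from (measurable_const.mul
          (((continuous_norm (E := ℂ)).measurable.pow_const 2).inv)).ennreal_ofReal).aemeasurable
        aemeasurable_const]
      have h1 : ∫⁻ z in ball (0:ℂ) ((1/2:ℝ)^k),
          ENNReal.ofReal (c * (‖z‖ ^ 2)⁻¹) = ⊤ := by
        have : ∀ z : ℂ, ENNReal.ofReal (c * (‖z‖ ^ 2)⁻¹)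
            = ENNReal.ofReal c * ENNReal.ofReal ((‖z‖ ^ 2)⁻¹) :=
          fun z => ENNReal.ofReal_mul hcpos.le
        simp_rw [this]
        rw [lintegral_const_mul _
          (show Measurable fun z : ℂ => ENNReal.ofReal ((‖z‖ ^ 2)⁻¹) from ((continuous_norm (E := ℂ)).measurable.pow_const 2).inv.ennreal_ofReal),
          lintegral_inv_sq_top (by positivity)]
        exact ENNReal.mul_top ((ENNReal.ofReal_pos.2 hcpos).ne')
      rw [h1, lintegral_one, Measure.restrict_apply_univ]
      rw [ENNReal.top_mul]
      have := volume_annulus 1 one_pos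
      norm_num at this
      rw [this]
      simp [NNReal.pi_ne_zero]
    refine top_le_iff.1 ?_
    calc (⊤:ℝ≥0∞) = ∫⁻ p in S, ENNReal.ofReal (c * (‖p.1‖ ^ 2)⁻¹) := hprod.symm
      _ ≤ ∫⁻ p in S, f p := setLIntegral_mono hfmeas hpt
      _ ≤ ∫⁻ p in M, f p := lintegral_mono_set hSsub
  · -- case 0 ≤ j, j*k + k + l < 0
    have hm : j * k + k + l < 0 := hjl.resolve_left (not_lt.2 hj)
    set n : ℕ := j.toNat with hn
    have hjn : (n:ℤ) = j := Int.toNat_of_nonneg hj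
    set C : ℝ := 3/4 * ((1:ℝ)/2) ^ (2*n) with hC
    have hCpos : 0 < C := by positivity
    have hfmeas : Measurable f := by
      apply Measurable.ennreal_ofReal
      exact ((measurable_zpow_real (2*j)).comp
          ((continuous_norm (E := ℂ)).measurable.comp measurable_fst)).mul
        ((measurable_zpow_real (2*l)).comp
          ((continuous_norm (E := ℂ)).measurable.comp measurable_snd))
    have habs1 : Measurable fun p : ℂ × ℂ => ‖p.1‖ :=
      (continuous_norm (E := ℂ)).measurable.comp measurable_fst
    have habs2 : Measurable fun p : ℂ × ℂ => ‖p.2‖ :=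
      (continuous_norm (E := ℂ)).measurable.comp measurable_snd
    have hM : MeasurableSet M := by
      have hMeq : M = ({p : ℂ × ℂ | ‖p.1‖ < 1} ∩ {p | ‖p.2‖ < 1}
          ∩ (Prod.snd ⁻¹' {(0:ℂ)})ᶜ ∩ {p | ‖p.1‖ < ‖p.2‖ ^ k}) := by
        ext p
        simp only [hMdef, mem_setOf_eq, mem_inter_iff, mem_compl_iff, mem_preimage,
          mem_singleton_iff]
        tauto
      rw [hMeq]
      exact (((measurableSet_lt habs1 measurable_const).inter
          (measurableSet_lt habs2 measurable_const)).inter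
          (measurable_snd (measurableSet_singleton (0:ℂ))).compl).inter
        (measurableSet_lt habs1 (habs2.pow_const k))
    have hpi1 : (1:ℝ≥0∞) ≤ (NNReal.pi : ℝ≥0∞) := by
      have h : (1:ℝ) ≤ Real.pi := by linarith [Real.pi_gt_three]
      exact_mod_cast h
    have heq : ∫⁻ p in M, f p = ∫⁻ w, ∫⁻ z, M.indicator f (z, w) := by
      rw [← lintegral_indicator hM, MeasureTheory.Measure.volume_eq_prod]
      exact lintegral_prod_symm _ (hfmeas.indicator hM).aemeasurable
    have hinner : ∀ w : ℂ, (ball (0:ℂ) 1 \ {0}).indicator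
        (fun w => ENNReal.ofReal (C * (‖w‖ ^ 2)⁻¹)) w
          ≤ ∫⁻ z, M.indicator f (z, w) := by
      intro w
      by_cases hw : w ∈ ball (0:ℂ) 1 \ {0}
      swap
      · simp [indicator_of_notMem hw]
      rw [indicator_of_mem hw]
      obtain ⟨hw1', hw0⟩ := hw
      rw [mem_ball_zero_iff] at hw1'
      have hw0' : w ≠ 0 := hw0
      have ht : 0 < ‖w‖ := norm_pos_iff.2 hw0'
      set t := ‖w‖ with htdef
      set ρ : ℝ := t ^ k with hρ
      have hρpos : 0 < ρ := pow_pos ht k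
      have hρlt1 : ρ < 1 := pow_lt_one₀ ht.le hw1' hk.ne'
      set T : Set ℂ := ball (0:ℂ) ρ \ closedBall 0 (ρ/2) with hT
      have hTsub : ∀ z ∈ T, (z, w) ∈ M := by
        rintro z ⟨hz1, _⟩
        rw [mem_ball_zero_iff] at hz1
        exact ⟨hz1.trans hρlt1, hw1', hw0', hz1⟩
      have h2j : (2*j) = ((2*n : ℕ) : ℤ) := by rw [← hjn]; push_cast; ring
      have key : (ρ/2) ^ (2*n) * t ^ (2*l) * (3/4 * ρ^2)
          = C * t ^ (2*((n:ℤ)*k + k + l)) := by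
        have ht' : t ≠ 0 := ht.ne'
        rw [hρ, hC, div_pow, ← pow_mul,
          show (2*((n:ℤ)*k + k + l)) = ((k*(2*n) + 2*k : ℕ) : ℤ) + 2*l by push_cast; ring,
          zpow_add₀ ht', zpow_natCast, pow_add, ← pow_mul]
        field_simp
        rw [← mul_pow, mul_comm k 2]; norm_num
      have hm2 : 2*((n:ℤ)*k + k + l) ≤ -2 := by rw [hjn]; omega
      calc ENNReal.ofReal (C * (t ^ 2)⁻¹)
          ≤ ENNReal.ofReal ((ρ/2) ^ (2*n) * t ^ (2*l) * (3/4 * ρ^2)) := by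
            apply ENNReal.ofReal_le_ofReal
            rw [key]
            apply mul_le_mul_of_nonneg_left _ hCpos.le
            have h := zpow_le_zpow_right_of_le_one₀ ht hw1'.le hm2
            simpa [zpow_neg] using h
        _ = ENNReal.ofReal ((ρ/2) ^ (2*n) * t ^ (2*l)) * ENNReal.ofReal (3/4 * ρ^2) :=
            ENNReal.ofReal_mul (by positivity)
        _ ≤ ENNReal.ofReal ((ρ/2) ^ (2*n) * t ^ (2*l)) * volume T := by
            apply mul_le_mul_right
            rw [hT, volume_annulus ρ hρpos]
            exact le_mul_of_one_le_right zero_le hpi1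
        _ = ∫⁻ _ in T, ENNReal.ofReal ((ρ/2) ^ (2*n) * t ^ (2*l)) :=
            (setLIntegral_const _ _).symm
        _ ≤ ∫⁻ z in T, f (z, w) := by
            have hgw : Measurable fun z : ℂ => f (z, w) := by
              have hrw : (fun z : ℂ => f (z, w)) = fun z : ℂ =>
                  ENNReal.ofReal (‖z‖ ^ (2*j) * ‖w‖ ^ (2*l)) := rfl
              rw [hrw]
              apply Measurable.ennreal_ofReal
              exact ((measurable_zpow_real (2*j)).comp
                (continuous_norm (E := ℂ)).measurable).mul measurable_const
            apply setLIntegral_mono hgw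
            rintro z ⟨hz1, hz2⟩
            rw [mem_closedBall_zero_iff, not_le] at hz2
            apply ENNReal.ofReal_le_ofReal
            apply mul_le_mul_of_nonneg_right _ (zpow_nonneg (norm_nonneg w) _)
            rw [h2j, zpow_natCast]
            exact pow_le_pow_left₀ (by positivity) hz2.le _
        _ = ∫⁻ z, T.indicator (fun z => f (z, w)) z :=
            (lintegral_indicator (measurableSet_ball.diff measurableSet_closedBall) _).symm
        _ ≤ ∫⁻ z, M.indicator f (z, w) := by
            apply lintegral_mono
            intro z
            show T.indicator (fun z => f (z, w)) z ≤ M.indicator f (z, w)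
            by_cases hz : z ∈ T
            · rw [indicator_of_mem hz, indicator_of_mem (hTsub z hz)]
            · simp [indicator_of_notMem hz]
    have houter : ∫⁻ w, (ball (0:ℂ) 1 \ {0}).indicator
        (fun w => ENNReal.ofReal (C * (‖w‖ ^ 2)⁻¹)) w = ⊤ := by
      rw [lintegral_indicator (measurableSet_ball.diff (measurableSet_singleton 0)) _,
        Measure.restrict_congr_set (diff_ae_eq_self.2
          (measure_mono_null inter_subset_right (measure_singleton 0)))]
      have : ∀ w : ℂ, ENNReal.ofReal (C * (‖w‖ ^ 2)⁻¹)
          = ENNReal.ofReal C * ENNReal.ofReal ((‖w‖ ^ 2)⁻¹) :=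
        fun w => ENNReal.ofReal_mul hCpos.le
      simp_rw [this]
      rw [lintegral_const_mul _
        (show Measurable fun z : ℂ => ENNReal.ofReal ((‖z‖ ^ 2)⁻¹) from ((continuous_norm (E := ℂ)).measurable.pow_const 2).inv.ennreal_ofReal),
        lintegral_inv_sq_top one_pos]
      exact ENNReal.mul_top ((ENNReal.ofReal_pos.2 hCpos).ne')
    refine top_le_iff.1 ?_
    calc (⊤:ℝ≥0∞) = ∫⁻ w, (ball (0:ℂ) 1 \ {0}).indicator
          (fun w => ENNReal.ofReal (C * (‖w‖ ^ 2)⁻¹)) w := houter.symm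
      _ ≤ ∫⁻ w, ∫⁻ z, M.indicator f (z, w) := lintegral_mono hinner
      _ = ∫⁻ p in M, f p := heq.symm
end

section
/- For each $\lambda > 1$, the function $t \mapsto -\log\big(\lambda e^{-t} - e^{-\lambda t}\big)$ is convex on $[0, +\infty)$, and the function $t \mapsto \log\big(\lambda e^{-t} - e^{-\lambda t}\big) + t$ is increasing on $[0, +\infty)$. (Note $\lambda e^{-t} - e^{-\lambda t} > 0$ for $t > 0$ and equals $\lambda - 1 > 0$ at $t = 0$.) -/
open Real Set

/-- For `λ > 1`: `λ e^{-t} - e^{-λ t} > 0` on `[0, ∞)`, the function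
`t ↦ -log(λ e^{-t} - e^{-λ t})` is convex on `[0, ∞)`, and
`t ↦ log(λ e^{-t} - e^{-λ t}) + t` is increasing on `[0, ∞)`. -/
theorem bergman_kernel_example (l : ℝ) (hl : 1 < l) :
    (∀ t ∈ Ici (0 : ℝ), 0 < l * exp (-t) - exp (-(l * t))) ∧
    ConvexOn ℝ (Ici (0 : ℝ)) (fun t => -log (l * exp (-t) - exp (-(l * t)))) ∧
    MonotoneOn (fun t => log (l * exp (-t) - exp (-(l * t))) + t) (Ici (0 : ℝ)) := by
  have hpos : ∀ t ∈ Ici (0:ℝ), 0 < l - exp ((1 - l) * t) := by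
    intro t ht
    have h1 : exp ((1 - l) * t) ≤ 1 := by
      rw [exp_le_one_iff]
      have : (0:ℝ) ≤ t := ht
      nlinarith
    linarith
  have hid : ∀ t : ℝ, l * exp (-t) - exp (-(l * t)) =
      exp (-t) * (l - exp ((1 - l) * t)) := by
    intro t
    have : exp (-(l * t)) = exp (-t) * exp ((1 - l) * t) := by
      rw [← exp_add]; ring_nf
    rw [this]; ring
  have hgpos : ∀ t ∈ Ici (0:ℝ), 0 < l * exp (-t) - exp (-(l * t)) := by
    intro t ht
    rw [hid t]
    exact mul_pos (exp_pos _) (hpos t ht)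
  have hlog : ∀ t ∈ Ici (0:ℝ), log (l * exp (-t) - exp (-(l * t))) =
      -t + log (l - exp ((1 - l) * t)) := by
    intro t ht
    rw [hid t, log_mul (exp_ne_zero _) (ne_of_gt (hpos t ht)), log_exp]
  -- concavity of L t = log (l - exp ((1-l) t)) on Ici 0
  have hLconc : ConcaveOn ℝ (Ici (0:ℝ)) (fun t => log (l - exp ((1 - l) * t))) := by
    refine ⟨convex_Ici 0, ?_⟩
    intro x hx y hy a b ha hb hab
    have hu := hpos x hx
    have hv := hpos y hy
    have hxy : a • x + b • y ∈ Ici (0:ℝ) :=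
      (convex_Ici (0:ℝ)) hx hy ha hb hab
    have hconvexp : exp ((1 - l) * (a • x + b • y)) ≤
        a * exp ((1 - l) * x) + b * exp ((1 - l) * y) := by
      have := convexOn_exp.2 (mem_univ ((1 - l) * x)) (mem_univ ((1 - l) * y)) ha hb hab
      have h2 : (1 - l) * (a • x + b • y) = a • ((1 - l) * x) + b • ((1 - l) * y) := by
        simp [smul_eq_mul]; ring
      rw [h2]
      simpa [smul_eq_mul] using this
    have hcomb_pos : 0 < a * (l - exp ((1 - l) * x)) + b * (l - exp ((1 - l) * y)) := by
      rcases ha.lt_or_eq with h | h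
      · have : 0 ≤ b * (l - exp ((1 - l) * y)) := mul_nonneg hb hv.le
        nlinarith [mul_pos h hu]
      · have hb1 : b = 1 := by linarith
        rw [← h, hb1]; simpa using hv
    have hstep1 : a * (l - exp ((1 - l) * x)) + b * (l - exp ((1 - l) * y)) ≤
        l - exp ((1 - l) * (a • x + b • y)) := by
      have : a * l + b * l = l := by rw [← add_mul, hab, one_mul]
      nlinarith
    have hloglog := strictConcaveOn_log_Ioi.concaveOn.2 (mem_Ioi.mpr hu) (mem_Ioi.mpr hv)
      ha hb hab
    calc a • log (l - exp ((1 - l) * x)) + b • log (l - exp ((1 - l) * y))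
        ≤ log (a • (l - exp ((1 - l) * x)) + b • (l - exp ((1 - l) * y))) := hloglog
      _ ≤ log (l - exp ((1 - l) * (a • x + b • y))) := by
          apply Real.log_le_log (by simpa [smul_eq_mul] using hcomb_pos)
          simpa [smul_eq_mul] using hstep1
  -- monotonicity of L on Ici 0
  have hLmono : MonotoneOn (fun t => log (l - exp ((1 - l) * t))) (Ici (0:ℝ)) := by
    intro x hx y hy hxy
    apply Real.log_le_log (hpos x hx)
    have : (1 - l) * y ≤ (1 - l) * x := by nlinarith
    have := exp_le_exp.mpr this
    linarith
  refine ⟨hgpos, ?_, ?_⟩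
  · have : ConvexOn ℝ (Ici (0:ℝ))
        (fun t => (fun t => -log (l - exp ((1 - l) * t))) t + (fun t : ℝ => t) t) :=
      hLconc.neg.add (convexOn_id (convex_Ici 0))
    refine this.congr ?_
    intro t ht
    simp only
    rw [hlog t ht]
    ring
  · intro x hx y hy hxy
    simp only
    rw [hlog x hx, hlog y hy]
    have := hLmono hx hy hxy
    simp only at this
    linarith
end

section
/- For $\lambda > 1$, $t \ge 0$, and a positive integer $k$, one has $\int_{M_0} |w|^{-2k} e^{-\lambda \max\{2\log(|z|/|w|^k) + t, \, 0\}} \, d\mu(z,w) = \pi^2 \cdot \frac{\lambda e^{-t} - e^{-\lambda t}}{\lambda - 1}$, where $M_0 = \{(z,w) \in \Delta \times \Delta^* : |z| < |w|^k\}$ and $\mu$ is Lebesgue measure on $\mathbb{C}^2$. -/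
open MeasureTheory


section WeightedIntegralAux
open Real Set intervalIntegral


lemma meas_aux (l t R : ℝ) :
    Measurable fun r : ℝ => Real.exp (-(l * max (2 * Real.log (r / R) + t) 0)) :=
  Real.measurable_exp.comp <| Measurable.neg <| Measurable.const_mul
    (Measurable.max (((Real.measurable_log.comp (measurable_id.div_const R)).const_mul 2).add_const t)
      measurable_const) l

lemma exp_max_le_one (l x : ℝ) (hl : 0 ≤ l) :
    Real.exp (-(l * max x 0)) ≤ 1 := by
  apply Real.exp_le_one_iff.2
  have := le_max_right x 0
  nlinarith

lemma aux1 (l t R : ℝ) (hl : 1 < l) (ht : 0 ≤ t) (hR : 0 < R) :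
    ∫ r in Set.Ioo (0:ℝ) R, r * Real.exp (-(l * max (2 * Real.log (r / R) + t) 0)) =
      R ^ 2 * (l * Real.exp (-t) - Real.exp (-(l * t))) / (2 * (l - 1)) := by
  set a := Real.exp (-(t/2)) with ha_def
  have ha0 : 0 < a := Real.exp_pos _
  have ha1 : a ≤ 1 := Real.exp_le_one_iff.2 (by linarith)
  have haR : 0 < a * R := by positivity
  have haRR : a * R ≤ R := by nlinarith
  have hmeas : Measurable fun r : ℝ => r * Real.exp (-(l * max (2 * Real.log (r / R) + t) 0)) :=
    measurable_id.mul (meas_aux l t R)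
  have hbdd0 : IntegrableOn
      (fun r : ℝ => r * Real.exp (-(l * max (2 * Real.log (r / R) + t) 0))) (Ioo 0 R) := by
    refine Integrable.mono'
      ((integrableOn_const measure_Ioo_lt_top.ne : IntegrableOn (fun _ => R) _ _))
      hmeas.aestronglyMeasurable ?_
    filter_upwards [ae_restrict_mem measurableSet_Ioo] with r hr
    have h1 := exp_max_le_one l (2 * Real.log (r / R) + t) (by linarith)
    rw [Real.norm_eq_abs, abs_mul, abs_of_pos hr.1, abs_of_pos (Real.exp_pos _)]
    nlinarith [hr.1.le, hr.2.le, Real.exp_pos (-(l * max (2 * Real.log (r / R) + t) 0))]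
  have hbdd : ∀ s : Set ℝ, s ⊆ Ioo 0 R → IntegrableOn
      (fun r : ℝ => r * Real.exp (-(l * max (2 * Real.log (r / R) + t) 0))) s :=
    fun s hs => hbdd0.mono_set hs
  have hdisj : Disjoint (Ioo (0:ℝ) (a*R)) (Ico (a*R) R) := by
    rw [Set.disjoint_left]; intro x hx hx'; exact absurd hx.2 (not_lt.2 hx'.1)
  have hsplit : Ioo (0:ℝ) R = Ioo 0 (a*R) ∪ Ico (a*R) R := (Ioo_union_Ico_eq_Ioo haR haRR).symm
  rw [hsplit, setIntegral_union hdisj measurableSet_Ico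
    (hbdd _ (by rw [hsplit]; exact subset_union_left))
    (hbdd _ (by rw [hsplit]; exact subset_union_right))]
  have h1 : ∫ r in Ioo (0:ℝ) (a*R), r * Real.exp (-(l * max (2 * Real.log (r / R) + t) 0))
      = (a*R)^2 / 2 := by
    rw [setIntegral_congr_fun measurableSet_Ioo (g := fun r => r)]
    · rw [← integral_Ioc_eq_integral_Ioo, ← intervalIntegral.integral_of_le haR.le,
        integral_id]
      ring
    · intro r hr
      have hrR : r / R < a := (div_lt_iff₀ hR).2 hr.2
      have hlog : Real.log (r / R) < -(t/2) := by
        calc Real.log (r/R) < Real.log a := Real.log_lt_log (div_pos hr.1 hR) hrR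
        _ = -(t/2) := Real.log_exp _
      have hm : max (2 * Real.log (r / R) + t) 0 = 0 := max_eq_right (by linarith)
      simp [hm]
  have h2 : ∫ r in Ico (a*R) R, r * Real.exp (-(l * max (2 * Real.log (r / R) + t) 0))
      = Real.exp (-(l*t)) * R ^ (2*l) * ((R ^ (1-2*l+1) - (a*R) ^ (1-2*l+1)) / (1-2*l+1)) := by
    rw [setIntegral_congr_fun measurableSet_Ico
      (g := fun r => Real.exp (-(l*t)) * R ^ (2*l) * r ^ (1-2*l))]
    · rw [MeasureTheory.integral_Ico_eq_integral_Ioo, ← integral_Ioc_eq_integral_Ioo,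
        ← intervalIntegral.integral_of_le haRR, intervalIntegral.integral_const_mul,
        integral_rpow (Or.inr ⟨by intro h; linarith,
          by rw [Set.uIcc_of_le haRR]; intro h; exact absurd h.1 (not_le.2 haR)⟩)]
    · intro r hr
      have hr0 : 0 < r := lt_of_lt_of_le haR hr.1
      have hrR : a ≤ r / R := (le_div_iff₀ hR).2 hr.1
      have hlog : -(t/2) ≤ Real.log (r / R) := by
        calc -(t/2) = Real.log a := (Real.log_exp _).symm
        _ ≤ Real.log (r/R) := Real.log_le_log ha0 hrR
      have hmax : max (2 * Real.log (r / R) + t) 0 = 2 * Real.log (r / R) + t :=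
        max_eq_left (by linarith)
      dsimp only
      rw [hmax]
      have e0 : -(l * (2 * Real.log (r / R) + t)) = Real.log (r/R) * (-(2*l)) + (-(l*t)) := by ring
      have e1 : Real.exp (Real.log (r/R) * (-(2*l))) = r ^ (-(2*l)) * R^(2*l) := by
        rw [← Real.rpow_def_of_pos (div_pos hr0 hR), Real.div_rpow hr0.le hR.le,
          Real.rpow_neg hR.le, div_eq_mul_inv, inv_inv]
      have e2 : r ^ (1-2*l) = r * r ^ (-(2*l)) := by
        rw [show (1-2*l) = 1 + (-(2*l)) by ring, Real.rpow_add hr0, Real.rpow_one]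
      rw [e0, Real.exp_add, e1, e2]
      ring
  rw [h1, h2]
  -- algebra
  have e3 : (1-2*l+1) = 2 - 2*l := by ring
  have hl1 : (2:ℝ) - 2*l ≠ 0 := by intro h; linarith
  have eR2 : R ^ (2*l) * R ^ (2-2*l) = R ^ 2 := by
    rw [← Real.rpow_add hR, show 2*l + (2-2*l) = (2:ℝ) by ring, Real.rpow_two]
  have eaR : (a*R) ^ (2-2*l) = a ^ (2-2*l) * R ^ (2-2*l) := Real.mul_rpow ha0.le hR.le
  have ea : a ^ (2-2*l) = Real.exp (l*t - t) := by
    rw [ha_def, ← Real.exp_mul]; ring_nf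
  have ea2 : a^2 = Real.exp (-t) := by
    rw [sq, ← Real.exp_add]; ring_nf
  have hE : Real.exp (-(l*t)) * Real.exp (l*t - t) = Real.exp (-t) := by
    rw [← Real.exp_add]; ring_nf
  rw [e3] at *
  rw [mul_pow, ea2]
  have lhs2 : Real.exp (-(l*t)) * R ^ (2*l) * ((R ^ (2-2*l) - (a*R) ^ (2-2*l))/(2-2*l))
      = (Real.exp (-(l*t)) * R^2 - Real.exp (-t) * R^2)/(2-2*l) := by
    rw [eaR, ea]
    have expand : Real.exp (-(l*t)) * R ^ (2*l) * ((R ^ (2-2*l) - Real.exp (l*t-t) * R ^ (2-2*l))/(2-2*l))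
        = (Real.exp (-(l*t)) * (R ^ (2*l) * R ^ (2-2*l)) - (Real.exp (-(l*t)) * Real.exp (l*t-t)) * (R ^ (2*l) * R ^ (2-2*l)))/(2-2*l) := by
      ring
    rw [expand, hE, eR2]
  rw [lhs2]
  have h2l : (2:ℝ)*(l-1) ≠ 0 := by intro h; nlinarith
  rw [div_add_div _ _ two_ne_zero hl1, div_eq_div_iff (mul_ne_zero two_ne_zero hl1) h2l]
  ring

lemma aux2 (l t R : ℝ) (hl : 1 < l) (ht : 0 ≤ t) (hR : 0 < R) :
    ∫ z in Metric.ball (0:ℂ) R,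
        Real.exp (-(l * max (2 * Real.log (‖z‖ / R) + t) 0)) =
      Real.pi * R ^ 2 * (l * Real.exp (-t) - Real.exp (-(l * t))) / (l - 1) := by
  set g : ℝ → ℝ := fun r => Real.exp (-(l * max (2 * Real.log (r / R) + t) 0)) with hg
  set F : ℝ → ℝ := (Set.Iio R).indicator g with hF
  have h0 : (∫ z in Metric.ball (0:ℂ) R,
      Real.exp (-(l * max (2 * Real.log (‖z‖ / R) + t) 0))) = ∫ z : ℂ, F ‖z‖ := by
    rw [← MeasureTheory.integral_indicator measurableSet_ball]
    congr 1; ext z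
    rw [hF, Set.indicator, Set.indicator]
    simp only [mem_ball_zero_iff, mem_Iio, hg]
  rw [h0, integral_fun_norm_addHaar volume F, Complex.finrank_real_complex]
  have hvol : volume.real (Metric.ball (0:ℂ) 1) = Real.pi := by
    simp [measureReal_def, Complex.volume_ball]
  rw [hvol]
  have h1 : (∫ y in Ioi (0:ℝ), y ^ (2-1) • F y) = ∫ r in Ioo (0:ℝ) R, r * g r := by
    have : ∀ y : ℝ, y ^ (2-1) • F y = (Set.Iio R).indicator (fun r => r * g r) y := by
      intro y
      simp [hF, Set.indicator, pow_one, smul_eq_mul, mul_ite]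
    rw [integral_congr_ae (Filter.Eventually.of_forall this)]
    rw [setIntegral_indicator measurableSet_Iio, Ioi_inter_Iio]
  rw [h1, aux1 l t R hl ht hR, nsmul_eq_mul, smul_eq_mul]
  have h2l : (l:ℝ) - 1 ≠ 0 := by intro h; linarith
  field_simp
  ring

end WeightedIntegralAux

open Real Set in
/-- For `λ > 1`, `t ≥ 0`, and `M₀ = {(z,w) ∈ Δ × Δ* : |z| < |w|^k}`:
`∫_{M₀} |w|^{-2k} e^{-λ max{2 log(|z|/|w|^k) + t, 0}} dμ = π² (λ e^{-t} - e^{-λt})/(λ-1)`. -/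
theorem weighted_integral_M0 (k : ℕ) (hk : 0 < k) (l t : ℝ) (hl : 1 < l) (ht : 0 ≤ t) :
    (∫ p in {p : ℂ × ℂ | ‖p.1‖ < 1 ∧ ‖p.2‖ < 1 ∧ p.2 ≠ 0 ∧
        ‖p.1‖ < ‖p.2‖ ^ k},
      (‖p.2‖ : ℝ) ^ (-(2 * (k : ℤ))) *
        Real.exp (-(l * max (2 * Real.log (‖p.1‖ / ‖p.2‖ ^ k) + t) 0))) =
      Real.pi ^ 2 * (l * Real.exp (-t) - Real.exp (-(l * t))) / (l - 1) := by
  set S : Set (ℂ × ℂ) := {p : ℂ × ℂ | ‖p.1‖ < 1 ∧ ‖p.2‖ < 1 ∧ p.2 ≠ 0 ∧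
    ‖p.1‖ < ‖p.2‖ ^ k} with hS_def
  set f : ℂ × ℂ → ℝ := fun p => (‖p.2‖ : ℝ) ^ (-(2 * (k : ℤ))) *
    Real.exp (-(l * max (2 * Real.log (‖p.1‖ / ‖p.2‖ ^ k) + t) 0)) with hf_def
  set D : ℝ := l * Real.exp (-t) - Real.exp (-(l * t)) with hD_def
  have hD0 : 0 ≤ D := by
    have h1 : Real.exp (-(l*t)) ≤ Real.exp (-t) := Real.exp_le_exp.2 (by nlinarith)
    have h2 := Real.exp_pos (-t)
    rw [hD_def]; nlinarith
  set C : ℝ := Real.pi * D / (l - 1) with hC_def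
  have hC0 : 0 ≤ C := div_nonneg (mul_nonneg Real.pi_nonneg hD0) (by linarith)
  -- measurability
  have habs1 : Measurable fun p : ℂ × ℂ => ‖p.1‖ :=
    continuous_norm.measurable.comp measurable_fst
  have habs2 : Measurable fun p : ℂ × ℂ => ‖p.2‖ :=
    continuous_norm.measurable.comp measurable_snd
  have hS : MeasurableSet S := by
    refine MeasurableSet.inter (measurableSet_lt habs1 measurable_const) ?_
    refine MeasurableSet.inter (measurableSet_lt habs2 measurable_const) ?_
    refine MeasurableSet.inter ?_ (measurableSet_lt habs1 (habs2.pow_const k))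
    exact (measurable_snd (measurableSet_singleton (0:ℂ))).compl
  have hzpow : ∀ x : ℝ, x ^ (-(2 * (k : ℤ))) = (x ^ (2*k))⁻¹ := by
    intro x
    rw [show -(2 * (k:ℤ)) = -(((2*k : ℕ) : ℤ)) by push_cast; ring, zpow_neg, zpow_natCast]
  have hfm : Measurable f := by
    apply Measurable.mul
    · simp only [hzpow]
      exact (habs2.pow_const _).inv
    · exact Real.measurable_exp.comp <| Measurable.neg <| Measurable.const_mul
        (Measurable.max (((Real.measurable_log.comp (habs1.div (habs2.pow_const k))).const_mul
          2).add_const t) measurable_const) l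
  have hf0 : ∀ p, 0 ≤ f p := by
    intro p
    apply mul_nonneg _ (Real.exp_pos _).le
    exact zpow_nonneg (norm_nonneg _) _
  -- to lintegral
  rw [integral_eq_lintegral_of_nonneg_ae (Filter.Eventually.of_forall fun p => hf0 p)
    hfm.aestronglyMeasurable]
  have key : (∫⁻ p in S, ENNReal.ofReal (f p)) = ENNReal.ofReal C * ENNReal.ofReal Real.pi := by
    rw [← lintegral_indicator hS, Measure.volume_eq_prod,
      lintegral_prod_symm (fun p => S.indicator (fun p => ENNReal.ofReal (f p)) p)
        ((hfm.ennreal_ofReal.indicator hS).aemeasurable)]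
    have inner : ∀ w : ℂ, (∫⁻ z : ℂ, S.indicator (fun p => ENNReal.ofReal (f p)) (z, w))
        = (Metric.ball (0:ℂ) 1 \ {0}).indicator (fun _ => ENNReal.ofReal C) w := by
      intro w
      by_cases hw : ‖w‖ < 1 ∧ w ≠ 0
      · obtain ⟨hw1, hw0⟩ := hw
        have hwpos : 0 < ‖w‖ := norm_pos_iff.2 hw0
        have hRpos : 0 < ‖w‖ ^ k := pow_pos hwpos k
        have hR1 : ‖w‖ ^ k < 1 := pow_lt_one₀ (norm_nonneg _) hw1 hk.ne'
        have hptw : ∀ z : ℂ, S.indicator (fun p => ENNReal.ofReal (f p)) (z, w)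
            = (Metric.ball (0:ℂ) (‖w‖ ^ k)).indicator
                (fun z => ENNReal.ofReal (f (z, w))) z := by
          intro z
          by_cases hz : ‖z‖ < ‖w‖ ^ k
          · rw [Set.indicator_of_mem (by exact ⟨lt_trans hz hR1, hw1, hw0, hz⟩),
              Set.indicator_of_mem (by simpa [Metric.mem_ball, Complex.dist_eq] using hz)]
          · rw [Set.indicator_of_notMem (fun hmem => hz hmem.2.2.2),
              Set.indicator_of_notMem (by simpa [Metric.mem_ball, Complex.dist_eq] using hz)]
        rw [lintegral_congr hptw, lintegral_indicator measurableSet_ball]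
        -- integrability of z ↦ f (z, w) on ball
        set c : ℝ := (‖w‖ : ℝ) ^ (-(2 * (k : ℤ))) with hc_def
        have hc0 : 0 ≤ c := zpow_nonneg (norm_nonneg _) _
        have hintg : IntegrableOn (fun z => f (z, w)) (Metric.ball (0:ℂ) (‖w‖ ^ k)) := by
          refine Integrable.mono'
            ((integrableOn_const measure_ball_lt_top.ne : IntegrableOn (fun _ => c) _ _))
            (hfm.comp (measurable_id.prodMk measurable_const)).aestronglyMeasurable ?_
          refine Filter.Eventually.of_forall fun z => ?_
          rw [Real.norm_eq_abs, abs_of_nonneg (hf0 _)]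
          have hle : Real.exp (-(l * max (2 * Real.log (‖z‖ / ‖w‖ ^ k) + t) 0)) ≤ 1 := by
            apply Real.exp_le_one_iff.2
            have := le_max_right (2 * Real.log (‖z‖ / ‖w‖ ^ k) + t) (0:ℝ)
            nlinarith
          calc f (z, w) = c * Real.exp (-(l * max (2 * Real.log (‖z‖ / ‖w‖ ^ k) + t) 0)) := rfl
          _ ≤ c * 1 := by exact mul_le_mul_of_nonneg_left hle hc0
          _ = c := mul_one c
        rw [← ofReal_integral_eq_lintegral_ofReal hintg
          (Filter.Eventually.of_forall fun z => hf0 _)]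
        have : (∫ z in Metric.ball (0:ℂ) (‖w‖ ^ k), f (z, w)) = C := by
          have hpull : (∫ z in Metric.ball (0:ℂ) (‖w‖ ^ k), f (z, w))
              = c * ∫ z in Metric.ball (0:ℂ) (‖w‖ ^ k),
                  Real.exp (-(l * max (2 * Real.log (‖z‖ / ‖w‖ ^ k) + t) 0)) := by
            rw [← integral_const_mul]
          rw [hpull, aux2 l t _ hl ht hRpos]
          have hc1 : c * (‖w‖ ^ k) ^ 2 = 1 := by
            rw [hc_def, hzpow _, ← pow_mul, mul_comm k 2]
            exact inv_mul_cancel₀ (pow_ne_zero _ hwpos.ne')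
          rw [hC_def, hD_def]
          have hl1 : l - 1 ≠ 0 := by intro h; linarith
          field_simp
          linear_combination (l * Real.exp (-t) - Real.exp (-(l*t))) * hc1
        rw [this, Set.indicator_of_mem (by simp [Metric.mem_ball, Complex.dist_eq, hw1, hw0])]
      · have hptw : ∀ z : ℂ, S.indicator (fun p => ENNReal.ofReal (f p)) (z, w) = 0 := by
          intro z
          apply Set.indicator_of_notMem
          intro hmem
          exact hw ⟨hmem.2.1, hmem.2.2.1⟩
        rw [lintegral_congr hptw, lintegral_zero,
          Set.indicator_of_notMem (by simpa [Metric.mem_ball, Complex.dist_eq, not_and_or] using hw)]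
    rw [lintegral_congr inner, lintegral_indicator
      (measurableSet_ball.diff (measurableSet_singleton 0)), setLIntegral_const]
    have hvol : volume (Metric.ball (0:ℂ) 1 \ {0}) = ENNReal.ofReal Real.pi := by
      rw [measure_diff_null (measure_singleton 0), Complex.volume_ball]
      simp [← NNReal.coe_real_pi, ENNReal.ofReal_coe_nnreal]
    rw [hvol]
  rw [key, ENNReal.toReal_mul, ENNReal.toReal_ofReal hC0, ENNReal.toReal_ofReal Real.pi_nonneg,
    hC_def]
  ring
end
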